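/- Let n ≥ 1, j ∈ {1,…,n}, and let D_j denote the one-particle Newton-Wigner-Pryce position operator (D_j f)(p) = −i( ∂f/∂p_j(p) − (p_j/(2‖p‖²)) f(p) ). Then for all smooth compactly supported f, g : ℝⁿ → ℂ whose supports do not contain 0: ∫_{ℝⁿ} conj(f(p)) (D_j g)(p) dμ(p) = ∫_{ℝⁿ} conj((D_j f)(p)) g(p) dμ(p). That is, the Newton-Wigner-Pryce operator is a symmetric operator on L²(ℝⁿ, μ). -/

import Mathlib

open MeasureTheory Real Filter
open RealInnerProductSpace

noncomputable section

/-- ℝⁿ as a Euclidean space. -/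
abbrev Eu (n : ℕ) := EuclideanSpace ℝ (Fin n)

/-- The Lorentz-invariant measure dμ(p) = dⁿp/(2‖p‖) for massless particles. -/
def lorentzMeasure (n : ℕ) : Measure (Eu n) :=
  (volume : Measure (Eu n)).withDensity fun p => ENNReal.ofReal (2 * ‖p‖)⁻¹

/-- The one-particle Newton-Wigner-Pryce position operator
(D_j f)(p) = −i(∂f/∂p_j(p) − (p_j/(2‖p‖²)) f(p)). -/
def NWP {n : ℕ} (j : Fin n) (f : Eu n → ℂ) (p : Eu n) : ℂ :=
  -Complex.I * (fderiv ℝ f p (EuclideanSpace.single j 1)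
    - ((p j / (2 * ‖p‖ ^ 2) : ℝ) : ℂ) * f p)

/-- A function vanishing outside a closed set avoiding `0` and continuous away from `0`
is continuous. -/
lemma contAux {n : ℕ} {F : Eu n → ℂ} {S : Set (Eu n)} (hS : IsClosed S)
    (h0 : (0 : Eu n) ∉ S) (hz : ∀ q, q ∉ S → F q = 0)
    (hc : ∀ q : Eu n, q ≠ 0 → ContinuousAt F q) : Continuous F := by
  rw [continuous_iff_continuousAt]
  intro p
  by_cases hp : p = 0
  · subst hp
    have hev : (fun _ : Eu n => (0 : ℂ)) =ᶠ[nhds (0 : Eu n)] F :=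
      Filter.eventuallyEq_of_mem (hS.isOpen_compl.mem_nhds h0)
        (fun q hq => (hz q hq).symm)
    exact continuousAt_const.congr hev
  · exact hc p hp

/-- The integral of a directional derivative of a `C¹` compactly supported function vanishes. -/
lemma integral_fderiv_zero {n : ℕ} {K : Eu n → ℂ} {v : Eu n}
    (hd : Differentiable ℝ K) (hK : Continuous K) (hc : HasCompactSupport K)
    (hi : Integrable (fun x => fderiv ℝ K x v) (volume : Measure (Eu n))) :
    ∫ x, fderiv ℝ K x v ∂(volume : Measure (Eu n)) = 0 := by
  have h := integral_mul_fderiv_eq_neg_fderiv_mul_of_integrable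
    (μ := (volume : Measure (Eu n))) (f := K) (g := fun _ => (1 : ℂ)) (v := v)
    (by simpa using hi)
    (by simp only [fderiv_const_apply, ContinuousLinearMap.zero_apply, mul_zero]
        exact integrable_zero _ _ _)
    (by simpa using hK.integrable_of_hasCompactSupport hc)
    (fun x _ => hd x) (fun x _ => differentiableAt_const (1 : ℂ))
  simp only [fderiv_const_apply, ContinuousLinearMap.zero_apply, mul_zero, mul_one,
    integral_zero] at h
  have := h.symm
  rwa [neg_eq_zero] at this

/-- The Newton-Wigner-Pryce operator is symmetric on L²(ℝⁿ, μ): for smooth compactly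
supported f, g whose supports do not contain 0,
∫ conj(f) (D_j g) dμ = ∫ conj(D_j f) g dμ. -/
theorem stmt9 {n : ℕ} (hn : 1 ≤ n) (j : Fin n)
    (f g : Eu n → ℂ) (hf : ContDiff ℝ (⊤ : ℕ∞) f) (hg : ContDiff ℝ (⊤ : ℕ∞) g)
    (hfc : HasCompactSupport f) (hgc : HasCompactSupport g)
    (hf0 : 0 ∉ tsupport f) (hg0 : 0 ∉ tsupport g) :
    ∫ p, (starRingEnd ℂ) (f p) * NWP j g p ∂(lorentzMeasure n)
      = ∫ p, (starRingEnd ℂ) (NWP j f p) * g p ∂(lorentzMeasure n) := by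
  classical
  set e : Eu n := EuclideanSpace.single j 1 with he
  -- Step 1 : rewrite the integrals as weighted Lebesgue integrals
  have hmeas : ∀ φ : Eu n → ℂ,
      ∫ p, φ p ∂(lorentzMeasure n)
        = ∫ p, ((2 * ‖p‖)⁻¹ : ℝ) • φ p ∂(volume : Measure (Eu n)) := by
    intro φ
    have hden : Measurable fun p : Eu n => Real.toNNReal ((2 * ‖p‖)⁻¹) :=
      ((measurable_const.mul measurable_norm).inv).real_toNNReal
    have hrw : (fun p : Eu n => ENNReal.ofReal (2 * ‖p‖)⁻¹)
        = fun p : Eu n => ((Real.toNNReal ((2 * ‖p‖)⁻¹) : NNReal) : ENNReal) := by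
      funext p; rfl
    rw [lorentzMeasure, hrw, integral_withDensity_eq_integral_smul hden φ]
    congr 1
    funext p
    rw [NNReal.smul_def, Real.coe_toNNReal _ (by positivity)]
  rw [hmeas, hmeas]
  -- the two integrands
  set A : Eu n → ℂ := fun p => ((2 * ‖p‖)⁻¹ : ℝ) • ((starRingEnd ℂ) (f p) * NWP j g p) with hA
  set B : Eu n → ℂ := fun p => ((2 * ‖p‖)⁻¹ : ℝ) • ((starRingEnd ℂ) (NWP j f p) * g p) with hB
  -- auxiliary vanishing facts
  have hfz : ∀ q, q ∉ tsupport f → f q = 0 := fun q hq => image_eq_zero_of_notMem_tsupport hq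
  have hfdz : ∀ q, q ∉ tsupport f → fderiv ℝ f q = 0 := by
    intro q hq
    have hev : f =ᶠ[nhds q] fun _ => 0 :=
      Filter.eventuallyEq_of_mem ((isClosed_tsupport f).isOpen_compl.mem_nhds hq)
        (fun r hr => hfz r hr)
    rw [hev.fderiv_eq]
    exact fderiv_const_apply 0
  -- the combined function K
  set K : Eu n → ℂ := fun q =>
    -Complex.I * ((((2 * ‖q‖)⁻¹ : ℝ) : ℂ) * ((starRingEnd ℂ) (f q) * g q)) with hK
  have hKz : ∀ q, q ∉ tsupport f → K q = 0 := by
    intro q hq; simp [hK, hfz q hq]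
  -- derivative of K away from 0
  have hKd : ∀ p : Eu n, p ≠ 0 → ∃ D : Eu n →L[ℝ] ℂ,
      HasFDerivAt K D p ∧ D e = A p - B p := by
    intro p hp
    have hnp : ‖p‖ ≠ 0 := norm_ne_zero_iff.mpr hp
    have h2np : (2 : ℝ) * ‖p‖ ≠ 0 := mul_ne_zero two_ne_zero hnp
    have h1 : HasFDerivAt (fun q : Eu n => ‖q‖ ^ 2) (2 • innerSL ℝ p) p :=
      (hasStrictFDerivAt_norm_sq p).hasFDerivAt
    have h2 : HasFDerivAt (fun q : Eu n => Real.sqrt (‖q‖ ^ 2))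
        ((1 / (2 * Real.sqrt (‖p‖ ^ 2))) • (2 • innerSL ℝ p)) p :=
      (Real.hasDerivAt_sqrt (pow_ne_zero 2 hnp)).comp_hasFDerivAt p h1
    have hfun : (fun q : Eu n => Real.sqrt (‖q‖ ^ 2)) = fun q : Eu n => ‖q‖ := by
      funext q; exact Real.sqrt_sq (norm_nonneg q)
    rw [hfun, Real.sqrt_sq (norm_nonneg p)] at h2
    have ht : HasDerivAt (fun t : ℝ => (2 * t)⁻¹) (-2 / (2 * ‖p‖) ^ 2) ‖p‖ := by
      have := ((hasDerivAt_id ‖p‖).const_mul 2).inv h2np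
      exact this.congr_deriv (by simp)
    have hw : HasFDerivAt (fun q : Eu n => (2 * ‖q‖)⁻¹)
        ((-2 / (2 * ‖p‖) ^ 2) • ((1 / (2 * ‖p‖)) • (2 • innerSL ℝ p))) p :=
      ht.comp_hasFDerivAt p h2
    have hwc : HasFDerivAt (fun q : Eu n => (((2 * ‖q‖)⁻¹ : ℝ) : ℂ))
        (Complex.ofRealCLM.comp
          ((-2 / (2 * ‖p‖) ^ 2) • ((1 / (2 * ‖p‖)) • (2 • innerSL ℝ p)))) p :=
      Complex.ofRealCLM.hasFDerivAt.comp p hw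
    have hfd : HasFDerivAt f (fderiv ℝ f p) p := (hf.differentiable (by simp) p).hasFDerivAt
    have hgd : HasFDerivAt g (fderiv ℝ g p) p := (hg.differentiable (by simp) p).hasFDerivAt
    have hcf : HasFDerivAt (fun q => (starRingEnd ℂ) (f q))
        ((Complex.conjCLE.toContinuousLinearMap).comp (fderiv ℝ f p)) p :=
      Complex.conjCLE.hasFDerivAt.comp p hfd
    have hh : HasFDerivAt (fun q => (starRingEnd ℂ) (f q) * g q)
        (((starRingEnd ℂ) (f p)) • (fderiv ℝ g p)
          + (g p) • ((Complex.conjCLE.toContinuousLinearMap).comp (fderiv ℝ f p))) p :=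
      hcf.mul hgd
    have hKD := (hwc.mul hh).const_mul (-Complex.I)
    refine ⟨_, hKD, ?_⟩
    -- evaluate the derivative at e and compare with A p - B p
    have hinner : ⟪p, e⟫ = p j := by
      rw [he]
      rw [EuclideanSpace.inner_single_right]
      simp
    simp only [hA, hB, NWP, ContinuousLinearMap.smul_apply, ContinuousLinearMap.add_apply,
      ContinuousLinearMap.comp_apply, ContinuousLinearMap.coe_smul', Pi.smul_apply,
      innerSL_apply_apply, hinner, smul_eq_mul, Complex.ofRealCLM_apply,
       Complex.real_smul, map_mul, map_sub, map_neg, Complex.conj_I,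
      Complex.conj_ofReal]
    push_cast
    have hpz : (‖p‖ : ℂ) ≠ 0 := by exact_mod_cast hnp
    field_simp [hpz]
    simp only [he, Complex.conjCLE_apply]
    ring
  -- differentiability of K
  have hKev0 : (fun _ : Eu n => (0 : ℂ)) =ᶠ[nhds (0 : Eu n)] K :=
    Filter.eventuallyEq_of_mem
      ((isClosed_tsupport f).isOpen_compl.mem_nhds hf0)
      (fun q hq => (hKz q hq).symm)
  have hKdiff : Differentiable ℝ K := by
    intro p
    by_cases hp : p = 0
    · subst hp
      exact (differentiableAt_const 0).congr_of_eventuallyEq hKev0.symm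
    · obtain ⟨D, hD, -⟩ := hKd p hp
      exact hD.differentiableAt
  -- the key pointwise identity
  have hkey : ∀ p : Eu n, A p - B p = fderiv ℝ K p e := by
    intro p
    by_cases hp : p = 0
    · subst hp
      have hfd0 : fderiv ℝ K 0 = 0 := by
        rw [hKev0.symm.fderiv_eq]
        exact fderiv_const_apply 0
      have hf00 : f 0 = 0 := hfz 0 hf0
      have hfd00 : fderiv ℝ f 0 = 0 := hfdz 0 hf0
      simp [hA, hB, NWP, hf00, hfd00, hfd0]
    · obtain ⟨D, hD, hDe⟩ := hKd p hp
      rw [hD.fderiv]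
      exact hDe.symm
  -- continuity facts
  have hwcont : ∀ q : Eu n, q ≠ 0 → ContinuousAt (fun q : Eu n => ((2 * ‖q‖)⁻¹ : ℝ)) q := by
    intro q hq
    exact ((continuous_const.mul continuous_norm).continuousAt).inv₀
      (mul_ne_zero two_ne_zero (norm_ne_zero_iff.mpr hq))
  have hccont : ∀ q : Eu n, q ≠ 0 →
      ContinuousAt (fun q : Eu n => ((q j / (2 * ‖q‖ ^ 2) : ℝ) : ℂ)) q := by
    intro q hq
    refine Complex.continuous_ofReal.continuousAt.comp ?_
    refine ContinuousAt.div ((EuclideanSpace.proj j : Eu n →L[ℝ] ℝ).continuous.continuousAt) ?_ ?_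
    · exact (continuous_const.mul (continuous_norm.pow 2)).continuousAt
    · have : ‖q‖ ≠ 0 := norm_ne_zero_iff.mpr hq
      positivity
  have hNWPg_cont : ∀ q : Eu n, q ≠ 0 → ContinuousAt (NWP j g) q := by
    intro q hq
    have h1 : Continuous fun q : Eu n => fderiv ℝ g q (EuclideanSpace.single j 1) :=
      (hg.continuous_fderiv (by simp)).clm_apply continuous_const
    unfold NWP
    exact continuousAt_const.mul
      ((h1.continuousAt).sub ((hccont q hq).mul hg.continuous.continuousAt))
  have hNWPf_cont : ∀ q : Eu n, q ≠ 0 → ContinuousAt (NWP j f) q := by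
    intro q hq
    have h1 : Continuous fun q : Eu n => fderiv ℝ f q (EuclideanSpace.single j 1) :=
      (hf.continuous_fderiv (by simp)).clm_apply continuous_const
    unfold NWP
    exact continuousAt_const.mul
      ((h1.continuousAt).sub ((hccont q hq).mul hf.continuous.continuousAt))
  -- continuity of A, B, K
  have hAcont : Continuous A := by
    refine contAux (isClosed_tsupport f) hf0 (fun q hq => ?_) (fun q hq => ?_)
    · simp [hA, hfz q hq]
    · exact (hwcont q hq).smul
        (((hf.continuous.star).continuousAt).mul (hNWPg_cont q hq))
  have hBcont : Continuous B := by
    refine contAux (isClosed_tsupport f) hf0 (fun q hq => ?_) (fun q hq => ?_)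
    · simp [hB, NWP, hfz q hq, hfdz q hq]
    · exact (hwcont q hq).smul
        (((hNWPf_cont q hq).star).mul hg.continuous.continuousAt)
  have hKcont : Continuous K := by
    refine contAux (isClosed_tsupport f) hf0 (fun q hq => hKz q hq) (fun q hq => ?_)
    exact continuousAt_const.mul
      ((Complex.continuous_ofReal.continuousAt.comp (hwcont q hq)).mul
        (((hf.continuous.star).continuousAt).mul hg.continuous.continuousAt))
  -- compact supports
  have hAsupp : HasCompactSupport A :=
    HasCompactSupport.intro hfc (fun x hx => by simp [hA, hfz x hx])
  have hBsupp : HasCompactSupport B :=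
    HasCompactSupport.intro hfc (fun x hx => by simp [hB, NWP, hfz x hx, hfdz x hx])
  have hKsupp : HasCompactSupport K :=
    HasCompactSupport.intro hfc (fun x hx => hKz x hx)
  -- integrability
  have hAint : Integrable A (volume : Measure (Eu n)) :=
    hAcont.integrable_of_hasCompactSupport hAsupp
  have hBint : Integrable B (volume : Measure (Eu n)) :=
    hBcont.integrable_of_hasCompactSupport hBsupp
  have hfint : Integrable (fun x => fderiv ℝ K x e) (volume : Measure (Eu n)) :=
    (hAint.sub hBint).congr (Filter.Eventually.of_forall fun p => hkey p)
  -- conclusion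
  have hzero : ∫ x, fderiv ℝ K x e ∂(volume : Measure (Eu n)) = 0 :=
    integral_fderiv_zero hKdiff hKcont hKsupp hfint
  have hsub : (∫ p, A p ∂(volume : Measure (Eu n)))
      - ∫ p, B p ∂(volume : Measure (Eu n)) = 0 := by
    rw [← integral_sub hAint hBint]
    rw [integral_congr_ae (Filter.Eventually.of_forall fun p => hkey p)]
    exact hzero
  exact sub_eq_zero.mp hsub

end
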